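/- Let ω be a contact form on a manifold M with Reeb field 𝒜 (so ω(𝒜) = 1 and ι_𝒜 dω = 0), let J be a complex structure on ker ω, and let g = ω ⊗ ω + dω ∘ (J × id) be the associated metric, assumed positive definite. If h is an isometry of (M,g) with h_* 𝒜 = ε𝒜 for ε ∈ {1,-1}, then h* ω = ε ω, h_* preserves ker ω, and h_* ∘ J = ε J ∘ h_* on ker ω. -/

import Mathlib

/-- Pointwise/algebraic version of: an isometry of a Sasaki-type metric
`g = ω ⊗ ω + dω ∘ (J × id)` sending the Reeb field `𝒜` to `ε𝒜` (`ε = ±1`)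
satisfies `h*ω = εω`, preserves `ker ω`, and satisfies `h ∘ J = ε J ∘ h` on
`ker ω`.

`V` models the space of vector fields, `ω` the contact form, `dω` its
(alternating) differential with `ι_𝒜 dω = 0` and `ω(𝒜) = 1`, `J` the complex
structure on `ker ω` (with `J𝒜 = 0`, `J² = -id` on `ker ω`), the Levi form
`dω(J·,·)` positive definite on `ker ω`, and `h` a linear isomorphism which is
an isometry of `g` and compatible with `d` (pullback naturality hypothesis
`hnat`). -/
theorem sasaki_isometry_pm (V : Type*) [AddCommGroup V] [Module ℝ V]
    (ω : V →ₗ[ℝ] ℝ) (dω : V →ₗ[ℝ] V →ₗ[ℝ] ℝ) (A : V) (J : V →ₗ[ℝ] V)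
    (h : V ≃ₗ[ℝ] V) (ε : ℝ) (hε : ε = 1 ∨ ε = -1)
    (hωA : ω A = 1)
    (halt : ∀ u : V, dω u u = 0)
    (hdA : ∀ u : V, dω A u = 0)
    (hJA : J A = 0)
    (hJJ : ∀ u : V, ω u = 0 → J (J u) = -u)
    (hJker : ∀ u : V, ω u = 0 → ω (J u) = 0)
    (hpos : ∀ u : V, ω u = 0 → u ≠ 0 → 0 < dω (J u) u)
    (hiso : ∀ u v : V,
      ω (h u) * ω (h v) + dω (J (h u)) (h v) = ω u * ω v + dω (J u) v)
    (hA : h A = ε • A)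
    (hnat : ∀ c : ℝ, (∀ u : V, ω (h u) = c * ω u) →
      ∀ u v : V, dω (h u) (h v) = c * dω u v) :
    (∀ u : V, ω (h u) = ε * ω u) ∧
    (∀ u : V, ω u = 0 → ω (h u) = 0) ∧
    (∀ u : V, ω u = 0 → h (J u) = ε • J (h u)) := by

  have hε2 : ε * ε = 1 := by rcases hε with h'|h' <;> simp [h']
  have hskew : ∀ u v : V, dω u v = - dω v u := by
    intro u v
    have h1 := halt (u + v)
    simp only [map_add, LinearMap.add_apply, halt u, halt v] at h1
    linarith
  have hω : ∀ u : V, ω (h u) = ε * ω u := by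
    intro u
    have h1 := hiso u A
    rw [hA] at h1
    have e1 : dω (J (h u)) (ε • A) = 0 := by
      rw [map_smul, hskew]; simp [hdA]
    have e2 : dω (J u) A = 0 := by rw [hskew]; simp [hdA]
    rw [e1, e2, map_smul, hωA] at h1
    simp only [smul_eq_mul, mul_one, add_zero] at h1
    -- h1 : ω (h u) * ε = ω u
    have := congrArg (fun x => ε * x) h1
    calc ω (h u) = ω (h u) * (ε * ε) := by rw [hε2, mul_one]
    _ = ε * (ω (h u) * ε) := by ring
    _ = ε * ω u := by rw [h1]
  have hd : ∀ u v : V, dω (h u) (h v) = ε * dω u v := hnat ε hω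
  refine ⟨hω, fun u hu => by rw [hω, hu, mul_zero], ?_⟩
  intro u hu
  have hhu : ω (h u) = 0 := by rw [hω, hu, mul_zero]
  have hJu : ω (J u) = 0 := hJker u hu
  have hhJu : ω (h (J u)) = 0 := by rw [hω, hJu, mul_zero]
  have hJhu : ω (J (h u)) = 0 := hJker _ hhu
  set w : V := h (J u) - ε • J (h u) with hw
  have hωw : ω w = 0 := by rw [hw]; simp [hhJu, hJhu]
  have hJw : J w = J (h (J u)) + ε • h u := by
    rw [hw, map_sub, map_smul, hJJ _ hhu, smul_neg, sub_neg_eq_add]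
  have key : ∀ v : V, dω (J w) (h v) = 0 := by
    intro v
    have h1 := hiso (J u) v
    rw [hhJu, hJu] at h1
    simp only [zero_mul, zero_add] at h1
    rw [hJJ u hu] at h1
    -- h1 : dω (J (h (J u))) (h v) = dω (-u) v
    rw [hJw, map_add, LinearMap.add_apply, map_smul, LinearMap.smul_apply,
      h1, hd, smul_eq_mul]
    simp only [map_neg, LinearMap.neg_apply]
    rw [← mul_assoc, hε2, one_mul]
    ring
  have hdww : dω (J w) w = 0 := by
    have := key (h.symm w)
    rwa [h.apply_symm_apply] at this
  have hw0 : w = 0 := by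
    by_contra hne
    have := hpos w hωw hne
    rw [hdww] at this
    exact lt_irrefl 0 this
  have := sub_eq_zero.mp hw0
  exact this
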